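/- arXiv:2604.02931 — 3 statements merged into one kernel-verified Lean document; each statement's English description precedes it below -/
import Mathlib

section
/- Let a = (1,0,0), b = (0,1,0), c = (c₁,c₂,c₃), d = (d₁,d₂,d₃) be vectors in ℝ³ satisfying: a·c + b·d = 0, a·d − b·c = 0, |a| = |b|, |c| = |d|, a·b = 0, c·d = 0, and c ≠ 0. Then c₃ = 0 and d₃ = 0, and moreover c = (c₁, c₂, 0), d = (c₂, −c₁, 0). -/
/-! With `a = e₀`, `b = e₁` the two obstruction relations say `d₀ = c₁` and `d₁ = -c₀`.
Then `‖c‖ = ‖d‖` and `⟪c, d⟫ = 0` collapse to `c₂² = d₂²` and `c₂ d₂ = 0`, which force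
`c₂ = d₂ = 0`. -/

open scoped RealInnerProductSpace

theorem eq_zero_and_eq_zero_of_sq_eq_sq_of_mul_eq_zero {M₀ : Type*} [MonoidWithZero M₀]
    [NoZeroDivisors M₀] {x y : M₀} (hsq : x ^ 2 = y ^ 2) (hxy : x * y = 0) :
    x = 0 ∧ y = 0 := by
  rcases mul_eq_zero.mp hxy with hx | hy
  · subst hx
    exact ⟨rfl, pow_eq_zero_iff two_ne_zero |>.mp (by rw [← hsq, zero_pow two_ne_zero])⟩
  · subst hy
    exact ⟨pow_eq_zero_iff two_ne_zero |>.mp (by rw [hsq, zero_pow two_ne_zero]), rfl⟩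

theorem EuclideanSpace.real_inner_fin_three (x y : EuclideanSpace ℝ (Fin 3)) :
    ⟪x, y⟫ = x 0 * y 0 + x 1 * y 1 + x 2 * y 2 := by
  simp only [PiLp.inner_apply, RCLike.inner_apply, conj_trivial, Fin.sum_univ_three]
  ring

theorem stmt1_general (a b c d : EuclideanSpace ℝ (Fin 3))
    (ha0 : a 0 = 1) (ha1 : a 1 = 0) (ha2 : a 2 = 0)
    (hb0 : b 0 = 0) (hb1 : b 1 = 1) (hb2 : b 2 = 0)
    (h1 : ⟪a, c⟫ + ⟪b, d⟫ = 0)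
    (h2 : ⟪a, d⟫ - ⟪b, c⟫ = 0)
    (hcd : ‖c‖ = ‖d‖)
    (hcd' : ⟪c, d⟫ = 0) :
    c 2 = 0 ∧ d 2 = 0 ∧ d 0 = c 1 ∧ d 1 = -(c 0) := by
  have hcc : ⟪c, c⟫ = ⟪d, d⟫ := by
    rw [real_inner_self_eq_norm_sq, real_inner_self_eq_norm_sq, hcd]
  simp only [EuclideanSpace.real_inner_fin_three, ha0, ha1, ha2, hb0, hb1, hb2] at h1 h2 hcc hcd'
  have hd0 : d 0 = c 1 := by linarith
  have hd1 : d 1 = -(c 0) := by linarith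
  rw [hd0, hd1] at hcc hcd'
  obtain ⟨hc2, hd2⟩ : c 2 = 0 ∧ d 2 = 0 :=
    eq_zero_and_eq_zero_of_sq_eq_sq_of_mul_eq_zero (by linear_combination hcc)
      (by linear_combination hcd')
  exact ⟨hc2, hd2, hd0, hd1⟩

/-- The n = 3 case of Corollary 1.4: the obstruction relations together with
weak conformality force `c₃ = d₃ = 0` and `d = (c₂, −c₁, 0)`. -/
theorem stmt1 (a b c d : EuclideanSpace ℝ (Fin 3))
    (ha0 : a 0 = 1) (ha1 : a 1 = 0) (ha2 : a 2 = 0)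
    (hb0 : b 0 = 0) (hb1 : b 1 = 1) (hb2 : b 2 = 0)
    (h1 : ⟪a, c⟫ + ⟪b, d⟫ = 0)
    (h2 : ⟪a, d⟫ - ⟪b, c⟫ = 0)
    (hab : ‖a‖ = ‖b‖) (hcd : ‖c‖ = ‖d‖)
    (hab' : ⟪a, b⟫ = 0) (hcd' : ⟪c, d⟫ = 0)
    (hc : c ≠ 0) :
    c 2 = 0 ∧ d 2 = 0 ∧ d 0 = c 1 ∧ d 1 = -(c 0) :=
  stmt1_general a b c d ha0 ha1 ha2 hb0 hb1 hb2 h1 h2 hcd hcd'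
end

section
/- Let a = (1,0,0,0), b = (0,1,0,0) in ℝ⁴ and c = (c₁,c₂,c₃,c₄), d = (−c₂, c₁, d₃, d₄) with |c| = |d| and c·d = 0, and suppose c₁² + c₂² > 0 and c ≠ 0. Then for every (s,t) ∈ ℝ² with s² + t² > 0, the norm of the orthogonal projection of v = s·c + t·d onto the plane spanned by a and b, divided by |v|, equals √(c₁² + c₂²)/|c|; in particular it is independent of (s,t). -/
open scoped RealInnerProductSpace

/-- The n ≥ 4 case of Corollary 1.4: for `v = s·c + t·d`, the ratio between
the norm of the projection of `v` onto the plane spanned by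
`a = (1,0,0,0), b = (0,1,0,0)` and `|v|` equals `√(c₁²+c₂²)/|c|`,
independently of `(s,t)`. -/
theorem stmt3 (c d : EuclideanSpace ℝ (Fin 4))
    (hd0 : d 0 = -(c 1)) (hd1 : d 1 = c 0)
    (hnorm : ‖c‖ = ‖d‖) (hcd : ⟪c, d⟫ = 0)
    (hc12 : c 0 ^ 2 + c 1 ^ 2 > 0) (hc : c ≠ 0) :
    ∀ s t : ℝ, s ^ 2 + t ^ 2 > 0 →
      Real.sqrt ((s • c + t • d) 0 ^ 2 + (s • c + t • d) 1 ^ 2) / ‖s • c + t • d‖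
        = Real.sqrt (c 0 ^ 2 + c 1 ^ 2) / ‖c‖ := by
  intro s t hst
  have hst' : (0:ℝ) ≤ s ^ 2 + t ^ 2 := le_of_lt hst
  have hnum : (s • c + t • d) 0 ^ 2 + (s • c + t • d) 1 ^ 2
      = (s ^ 2 + t ^ 2) * (c 0 ^ 2 + c 1 ^ 2) := by
    simp only [PiLp.add_apply, PiLp.smul_apply, smul_eq_mul, hd0, hd1]
    ring
  have hv2 : ‖s • c + t • d‖ ^ 2 = (s ^ 2 + t ^ 2) * ‖c‖ ^ 2 := by
    rw [norm_add_sq_real, inner_smul_left, inner_smul_right, hcd,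
      norm_smul, norm_smul, hnorm]
    simp [mul_pow, sq_abs]
    ring
  have hv : ‖s • c + t • d‖ = Real.sqrt (s ^ 2 + t ^ 2) * ‖c‖ := by
    have h1 : (0:ℝ) ≤ Real.sqrt (s ^ 2 + t ^ 2) * ‖c‖ :=
      mul_nonneg (Real.sqrt_nonneg _) (norm_nonneg _)
    nlinarith [norm_nonneg (s • c + t • d), Real.sq_sqrt hst',
      Real.sqrt_nonneg (s ^ 2 + t ^ 2)]
  have hs0 : Real.sqrt (s ^ 2 + t ^ 2) ≠ 0 := by
    positivity
  rw [hnum, Real.sqrt_mul hst', hv, mul_div_mul_left _ _ hs0]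
end

section
/- Let π₁ and π₂ be two 2-dimensional subspaces of ℝ⁴ with orthonormal bases {a,b} and {c/|c|, d/|c|} respectively, where a = (1,0,0,0), b = (0,1,0,0), c = (c₁,c₂,c₃,c₄), d = (−c₂,c₁,d₃,d₄), |c| = |d| ≠ 0, c·d = 0. Then π₁ and π₂ are isoclinic: for all nonzero v ∈ π₂, the quantity |P v|/|v|, where P is the orthogonal projection onto π₁, is constant. -/
open scoped RealInnerProductSpace

/-!
Projecting onto `π₁ = span {e₀, e₁}` keeps the first two coordinates, so `P d` is `P c` turned by a
quarter turn inside `π₁`: `P c ⟂ P d` and `‖P c‖ = ‖P d‖`. As also `c ⟂ d` and `‖c‖ = ‖d‖`, for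
`v = s c + t d` both `‖v‖²` and `‖P v‖²` are `s² + t²` times the corresponding quantity for `c`,
so `‖P v‖ / ‖v‖ = ‖P c‖ / ‖c‖`.
-/

section

variable {E F : Type*} [NormedAddCommGroup E] [InnerProductSpace ℝ E]
  [NormedAddCommGroup F] [InnerProductSpace ℝ F]

theorem norm_smul_add_smul_sq_of_inner_eq_zero {x y : E} (hxy : ⟪x, y⟫ = 0) (hn : ‖x‖ = ‖y‖)
    (s t : ℝ) : ‖s • x + t • y‖ ^ 2 = (s ^ 2 + t ^ 2) * ‖x‖ ^ 2 := by
  rw [norm_add_sq_real, inner_smul_left, inner_smul_right, hxy, norm_smul, norm_smul, ← hn,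
    mul_pow, mul_pow, Real.norm_eq_abs, Real.norm_eq_abs, sq_abs, sq_abs]
  simp only [conj_trivial]
  ring

theorem norm_map_div_norm_eq_of_mem_span_pair {𝓕 : Type*} [FunLike 𝓕 E F] [LinearMapClass 𝓕 ℝ E F]
    {T : 𝓕} {c d : E} (hcd : ⟪c, d⟫ = 0) (hTcd : ⟪T c, T d⟫ = 0) (hn : ‖c‖ = ‖d‖)
    (hTn : ‖T c‖ = ‖T d‖) {v : E} (hv : v ∈ Submodule.span ℝ {c, d}) (hv0 : v ≠ 0) :
    ‖T v‖ / ‖v‖ = ‖T c‖ / ‖c‖ := by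
  obtain ⟨s, t, rfl⟩ := Submodule.mem_span_pair.1 hv
  have hnv := norm_smul_add_smul_sq_of_inner_eq_zero hcd hn s t
  have hnTv : ‖T (s • c + t • d)‖ ^ 2 = (s ^ 2 + t ^ 2) * ‖T c‖ ^ 2 := by
    rw [map_add, map_smul, map_smul]
    exact norm_smul_add_smul_sq_of_inner_eq_zero hTcd hTn s t
  have hst : s ^ 2 + t ^ 2 ≠ 0 := by
    rintro hst
    rw [hst, zero_mul, sq_eq_zero_iff, norm_eq_zero] at hnv
    exact hv0 hnv
  refine (pow_left_inj₀ (by positivity) (by positivity) two_ne_zero).1 ?_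
  rw [div_pow, div_pow, hnv, hnTv, mul_div_mul_left _ _ hst]

theorem starProjection_span_pair_of_orthonormal {a b : E}
    [(Submodule.span ℝ {a, b}).HasOrthogonalProjection] (ha : ‖a‖ = 1) (hb : ‖b‖ = 1)
    (hab : ⟪a, b⟫ = 0) (v : E) :
    (Submodule.span ℝ {a, b}).starProjection v = ⟪a, v⟫ • a + ⟪b, v⟫ • b := by
  refine Submodule.eq_starProjection_of_mem_of_inner_eq_zero
    (Submodule.mem_span_pair.2 ⟨_, _, rfl⟩) fun w hw => ?_
  obtain ⟨x, y, rfl⟩ := Submodule.mem_span_pair.1 hw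
  have hba : ⟪b, a⟫ = 0 := by rw [real_inner_comm, hab]
  simp only [inner_sub_left, inner_add_left, inner_add_right, inner_smul_left, inner_smul_right,
    real_inner_self_eq_norm_sq, ha, hb, hab, hba, conj_trivial]
  rw [real_inner_comm v a, real_inner_comm v b]
  ring

end

theorem stmt4_general (a b c d : EuclideanSpace ℝ (Fin 4))
    (ha0 : a 0 = 1) (ha1 : a 1 = 0) (ha2 : a 2 = 0) (ha3 : a 3 = 0)
    (hb0 : b 0 = 0) (hb1 : b 1 = 1) (hb2 : b 2 = 0) (hb3 : b 3 = 0)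
    (hd0 : d 0 = -(c 1)) (hd1 : d 1 = c 0)
    (hnorm : ‖c‖ = ‖d‖) (hcd : ⟪c, d⟫ = 0) :
    ∃ k : ℝ, ∀ v ∈ Submodule.span ℝ ({‖c‖⁻¹ • c, ‖c‖⁻¹ • d} :
        Set (EuclideanSpace ℝ (Fin 4))), v ≠ 0 →
      ‖(Submodule.orthogonalProjection (Submodule.span ℝ ({a, b} :
          Set (EuclideanSpace ℝ (Fin 4)))) v : EuclideanSpace ℝ (Fin 4))‖ / ‖v‖ = k := by
  obtain rfl : a = EuclideanSpace.single 0 1 := by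
    ext i; fin_cases i <;> simp [ha0, ha1, ha2, ha3]
  obtain rfl : b = EuclideanSpace.single 1 1 := by
    ext i; fin_cases i <;> simp [hb0, hb1, hb2, hb3]
  set P := (Submodule.span ℝ {EuclideanSpace.single (0 : Fin 4) (1 : ℝ),
    EuclideanSpace.single 1 1}).starProjection
  have hP (v : EuclideanSpace ℝ (Fin 4)) :
      P v = v 0 • EuclideanSpace.single 0 1 + v 1 • EuclideanSpace.single 1 1 := by
    rw [starProjection_span_pair_of_orthonormal (by simp) (by simp)
      (by simp [EuclideanSpace.inner_single_left]),
      EuclideanSpace.inner_single_left, EuclideanSpace.inner_single_left]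
    simp only [conj_trivial, one_mul]
  have hPcd : ⟪P c, P d⟫ = 0 := by
    simp [hP, hd0, hd1, PiLp.inner_apply, Fin.sum_univ_four, mul_comm]
  have hPn : ‖P c‖ = ‖P d‖ := by
    simp [hP, hd0, hd1, EuclideanSpace.norm_eq, Fin.sum_univ_four, add_comm]
  have hspan : Submodule.span ℝ {‖c‖⁻¹ • c, ‖c‖⁻¹ • d} ≤ Submodule.span ℝ {c, d} := by
    rw [Submodule.span_le, Set.insert_subset_iff, Set.singleton_subset_iff]
    exact ⟨Submodule.smul_mem _ _ (Submodule.subset_span (by simp)),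
      Submodule.smul_mem _ _ (Submodule.subset_span (by simp))⟩
  refine ⟨‖P c‖ / ‖c‖, fun v hv hv0 => ?_⟩
  rw [← Submodule.starProjection_apply]
  exact norm_map_div_norm_eq_of_mem_span_pair hcd hPcd hnorm hPn (hspan hv) hv0

/-- Corollary 1.4, n ≥ 4: the planes `π₁ = span{a,b}` and
`π₂ = span{c/|c|, d/|c|}` in ℝ⁴ are isoclinic: the ratio `|P v|/|v|`
(with `P` the orthogonal projection onto `π₁`) is the same for all
nonzero `v ∈ π₂`. -/
theorem stmt4 (a b c d : EuclideanSpace ℝ (Fin 4))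
    (ha0 : a 0 = 1) (ha1 : a 1 = 0) (ha2 : a 2 = 0) (ha3 : a 3 = 0)
    (hb0 : b 0 = 0) (hb1 : b 1 = 1) (hb2 : b 2 = 0) (hb3 : b 3 = 0)
    (hd0 : d 0 = -(c 1)) (hd1 : d 1 = c 0)
    (hnorm : ‖c‖ = ‖d‖) (hc : ‖c‖ ≠ 0) (hcd : ⟪c, d⟫ = 0) :
    ∃ k : ℝ, ∀ v ∈ Submodule.span ℝ ({‖c‖⁻¹ • c, ‖c‖⁻¹ • d} :
        Set (EuclideanSpace ℝ (Fin 4))), v ≠ 0 →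
      ‖(Submodule.orthogonalProjection (Submodule.span ℝ ({a, b} :
          Set (EuclideanSpace ℝ (Fin 4)))) v : EuclideanSpace ℝ (Fin 4))‖ / ‖v‖ = k :=
  stmt4_general a b c d ha0 ha1 ha2 ha3 hb0 hb1 hb2 hb3 hd0 hd1 hnorm hcd
end
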